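/- Let ε ≥ 0 and Δ > 0. Let i ≤ −1 and 0 ≤ r < Δ be real numbers, and let a, b, m be real numbers satisfying |a − Φ⁻(i)| ≤ ε, |b − (Φ⁻)'(i)| ≤ ε, and |m − r·b| ≤ ε. Then the fixed-point first-order Taylor approximation a − m of Φ⁻(i − r) satisfies |Φ⁻(i − r) − (a − m)| ≤ −E⁻(−1, Δ) + (2 + Δ)·ε. -/

import Mathlib

/-!
Both `Φ⁻` and `(Φ⁻)'` are concave on `(-∞, 0)`. Concavity of `Φ⁻` makes the Taylor remainder
`E⁻(i, r)` nonpositive and antitone in `r`; its derivative in `i` is the Taylor remainder of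
`(Φ⁻)'`, which is nonpositive by concavity of `(Φ⁻)'`, so `E⁻(i, r)` is also antitone in `i`.
Hence `E⁻(-1, Δ) ≤ E⁻(i, r) ≤ 0`, and the error `Φ⁻(i - r) - (a - m)` splits as
`E⁻(i, r) + (Φ⁻(i) - a) + (m - r b) + r (b - (Φ⁻)'(i))`, whose terms are bounded by
`-E⁻(-1, Δ)`, `ε`, `ε` and `Δ ε`.
-/

/-- Φ⁻(x) = log₂(1 − 2^x) -/
noncomputable def Phim (x : ℝ) : ℝ := Real.logb 2 (1 - (2:ℝ) ^ x)

/-- (Φ⁻)'(x) = −2^x / (1 − 2^x) -/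
noncomputable def dPhim (x : ℝ) : ℝ := -(2:ℝ) ^ x / (1 - (2:ℝ) ^ x)

/-- First-order Taylor remainder E⁻(i, r) = Φ⁻(i − r) − Φ⁻(i) + r·(Φ⁻)'(i) -/
noncomputable def Em (i r : ℝ) : ℝ := Phim (i - r) - Phim i + r * dPhim i

open Set

noncomputable def taylorRemainder (f f' : ℝ → ℝ) (x r : ℝ) : ℝ := f (x - r) - f x + r * f' x

section TaylorRemainder

variable {f f' f'' : ℝ → ℝ} {c : ℝ}

lemma antitoneOn_taylorRemainder_right (hf : ∀ y < c, HasDerivAt f (f' y) y)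
    (hf' : AntitoneOn f' (Iio c)) {x : ℝ} (hx : x < c) :
    AntitoneOn (taylorRemainder f f' x) (Ici 0) := by
  have hderiv : ∀ t ∈ Ici (0 : ℝ),
      HasDerivAt (taylorRemainder f f' x) (-f' (x - t) + f' x) t := fun t ht => by
    have hxt : x - t < c := by linarith [mem_Ici.mp ht]
    exact (((hf _ hxt).comp_const_sub x t).sub_const (f x)).fun_add (hasDerivAt_mul_const (f' x))
  refine antitoneOn_of_hasDerivWithinAt_nonpos (convex_Ici 0)
    (fun t ht => (hderiv t ht).continuousAt.continuousWithinAt)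
    (fun t ht => (hderiv t (interior_subset ht)).hasDerivWithinAt) fun t ht => ?_
  rw [interior_Ici, mem_Ioi] at ht
  have : f' x ≤ f' (x - t) := hf' (by simp only [mem_Iio]; linarith) hx (by linarith)
  linarith

lemma taylorRemainder_nonpos (hf : ∀ y < c, HasDerivAt f (f' y) y)
    (hf' : AntitoneOn f' (Iio c)) {x r : ℝ} (hx : x < c) (hr : 0 ≤ r) :
    taylorRemainder f f' x r ≤ 0 := by
  simpa [taylorRemainder] using
    antitoneOn_taylorRemainder_right hf hf' hx self_mem_Ici (mem_Ici.mpr hr) hr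

lemma antitoneOn_taylorRemainder_left (hf : ∀ y < c, HasDerivAt f (f' y) y)
    (hf' : ∀ y < c, HasDerivAt f' (f'' y) y) (hf'' : AntitoneOn f'' (Iio c)) {r : ℝ}
    (hr : 0 ≤ r) : AntitoneOn (fun x => taylorRemainder f f' x r) (Iio c) := by
  have hderiv : ∀ x < c,
      HasDerivAt (fun x => taylorRemainder f f' x r) (taylorRemainder f' f'' x r) x :=
    fun x hx => by
      have hxr : x - r < c := by linarith
      exact (((hf _ hxr).comp_sub_const x r).fun_sub (hf x hx)).fun_add ((hf' x hx).const_mul r)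
  refine antitoneOn_of_hasDerivWithinAt_nonpos (f' := fun x => taylorRemainder f' f'' x r)
    (convex_Iio c) (fun x hx => (hderiv x hx).continuousAt.continuousWithinAt) ?_ ?_ <;>
    rw [interior_Iio]
  · exact fun x hx => (hderiv x hx).hasDerivWithinAt
  · exact fun x hx => taylorRemainder_nonpos hf' hf'' hx hr

end TaylorRemainder

noncomputable def ddPhim (x : ℝ) : ℝ := -(Real.log 2 * (2:ℝ) ^ x) / (1 - (2:ℝ) ^ x) ^ 2

lemma hasDerivAt_one_sub_two_rpow (x : ℝ) :
    HasDerivAt (fun y : ℝ => 1 - (2:ℝ) ^ y) (-((2:ℝ) ^ x * Real.log 2)) x := by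
  simpa using ((Real.hasStrictDerivAt_const_rpow two_pos x).hasDerivAt).const_sub 1

lemma hasDerivAt_Phim {x : ℝ} (hx : x < 0) : HasDerivAt Phim (dPhim x) x := by
  have hlt : (2:ℝ) ^ x < 1 := Real.rpow_lt_one_of_one_lt_of_neg one_lt_two hx
  have hne : 1 - (2:ℝ) ^ x ≠ 0 := by linarith
  have hlog : Real.log 2 ≠ 0 := (Real.log_pos one_lt_two).ne'
  refine (((hasDerivAt_one_sub_two_rpow x).log hne).div_const (Real.log 2)).congr_deriv ?_
  rw [dPhim]
  field_simp

lemma hasDerivAt_dPhim {x : ℝ} (hx : x < 0) : HasDerivAt dPhim (ddPhim x) x := by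
  have hlt : (2:ℝ) ^ x < 1 := Real.rpow_lt_one_of_one_lt_of_neg one_lt_two hx
  have hne : 1 - (2:ℝ) ^ x ≠ 0 := by linarith
  refine (((Real.hasStrictDerivAt_const_rpow two_pos x).hasDerivAt.fun_neg).fun_div
    (hasDerivAt_one_sub_two_rpow x) hne).congr_deriv ?_
  rw [ddPhim]
  field_simp
  ring

lemma antitoneOn_dPhim : AntitoneOn dPhim (Iio 0) := by
  intro x hx y hy hxy
  have hu := Real.rpow_pos_of_pos two_pos x
  have huv : (2:ℝ) ^ x ≤ (2:ℝ) ^ y := Real.rpow_le_rpow_of_exponent_le one_le_two hxy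
  have hv1 : (2:ℝ) ^ y < 1 := Real.rpow_lt_one_of_one_lt_of_neg one_lt_two hy
  rw [dPhim, dPhim, div_le_div_iff₀ (by linarith) (by linarith)]
  nlinarith

lemma antitoneOn_ddPhim : AntitoneOn ddPhim (Iio 0) := by
  intro x hx y hy hxy
  have hu := Real.rpow_pos_of_pos two_pos x
  have huv : (2:ℝ) ^ x ≤ (2:ℝ) ^ y := Real.rpow_le_rpow_of_exponent_le one_le_two hxy
  have hv1 : (2:ℝ) ^ y < 1 := Real.rpow_lt_one_of_one_lt_of_neg one_lt_two hy
  have hlog : 0 < Real.log 2 := Real.log_pos one_lt_two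
  rw [ddPhim, ddPhim, div_le_div_iff₀ (pow_pos (by linarith) 2) (pow_pos (by linarith) 2)]
  -- with `u = 2 ^ x ≤ v = 2 ^ y`: `v (1 - u)² - u (1 - v)² = (v - u) (1 - u v)`
  nlinarith [mul_nonneg (sub_nonneg.mpr huv) (by nlinarith : (0:ℝ) ≤ 1 - (2:ℝ) ^ x * (2:ℝ) ^ y),
    mul_pos hlog hu, mul_pos hlog (hu.trans_le huv)]

lemma Em_nonpos {i r : ℝ} (hi : i < 0) (hr : 0 ≤ r) : Em i r ≤ 0 :=
  taylorRemainder_nonpos (fun _ => hasDerivAt_Phim) antitoneOn_dPhim hi hr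

lemma Em_neg_one_le {i r Δ : ℝ} (hi : i ≤ -1) (hr : 0 ≤ r) (hrΔ : r ≤ Δ) :
    Em (-1) Δ ≤ Em i r :=
  calc Em (-1) Δ ≤ Em (-1) r :=
        antitoneOn_taylorRemainder_right (fun _ => hasDerivAt_Phim) antitoneOn_dPhim
          (by norm_num) hr (hr.trans hrΔ) hrΔ
    _ ≤ Em i r :=
        antitoneOn_taylorRemainder_left (fun _ => hasDerivAt_Phim) (fun _ => hasDerivAt_dPhim)
          antitoneOn_ddPhim hr (by simp only [mem_Iio]; linarith) (by norm_num) hi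

theorem stmt_4_general (ε Δ : ℝ)
    (i r : ℝ) (hi : i ≤ -1) (hr0 : 0 ≤ r) (hrΔ : r < Δ)
    (a b m : ℝ)
    (ha : |a - Phim i| ≤ ε)
    (hb : |b - dPhim i| ≤ ε)
    (hm : |m - r * b| ≤ ε) :
    |Phim (i - r) - (a - m)| ≤ -Em (-1) Δ + (2 + Δ) * ε := by
  have hE : |Em i r| ≤ -Em (-1) Δ := by
    rw [abs_of_nonpos (Em_nonpos (by linarith) hr0)]
    linarith [Em_neg_one_le hi hr0 hrΔ.le]
  have hrb : |r * (b - dPhim i)| ≤ Δ * ε := by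
    rw [abs_mul, abs_of_nonneg hr0]
    exact mul_le_mul hrΔ.le hb (abs_nonneg _) (hr0.trans hrΔ.le)
  rw [abs_sub_comm] at ha
  calc |Phim (i - r) - (a - m)|
      = |Em i r + (Phim i - a) + (m - r * b) + r * (b - dPhim i)| := by congr 1; rw [Em]; ring
    _ ≤ |Em i r| + |Phim i - a| + |m - r * b| + |r * (b - dPhim i)| := by
        linarith [abs_add_le (Em i r + (Phim i - a) + (m - r * b)) (r * (b - dPhim i)),
          abs_add_le (Em i r + (Phim i - a)) (m - r * b), abs_add_le (Em i r) (Phim i - a)]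
    _ ≤ -Em (-1) Δ + (2 + Δ) * ε := by linarith

theorem stmt_4 (ε Δ : ℝ) (hε : 0 ≤ ε) (hΔ : 0 < Δ)
    (i r : ℝ) (hi : i ≤ -1) (hr0 : 0 ≤ r) (hrΔ : r < Δ)
    (a b m : ℝ)
    (ha : |a - Phim i| ≤ ε)
    (hb : |b - dPhim i| ≤ ε)
    (hm : |m - r * b| ≤ ε) :
    |Phim (i - r) - (a - m)| ≤ -Em (-1) Δ + (2 + Δ) * ε :=
  stmt_4_general ε Δ i r hi hr0 hrΔ a b m ha hb hm
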